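/- Let q = 2h+3 with h ≥ 0 an integer, λ_q = 2 cos(π/q), f_q the Hurwitz–Nakada map, θ_1(x) = −1/(x + λ_q) and θ_2(x) = −1/(x + 2λ_q). Then the f_q-orbit of −λ_q/2 is given by: f_q^{i}(−λ_q/2) = θ_1^{∘(h−i)}(θ_2(θ_1^{∘h}(0))) for every 0 ≤ i ≤ h, and f_q^{h+1+i}(−λ_q/2) = θ_1^{∘(h−i)}(0) for every 0 ≤ i ≤ h. In particular f_q^{q−2}(−λ_q/2) = 0, and the q−1 points f_q^{i}(−λ_q/2) for 0 ≤ i ≤ q−2 are pairwise distinct, so the orbit of −λ_q/2 under f_q has exactly q−1 = κ_q + 1 elements. -/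

import Mathlib

/-!
Write `s_k = sin (kπ/q)`. The addition formula gives the Chebyshev recurrence
`s_{k+2} = λ_q s_{k+1} - s_k`, so `θ_1` maps the ratio `-a_k/a_{k+1}` of any solution `a` of the
recurrence to `-a_{k+1}/a_{k+2}`. Hence `θ_1^k(0) = -s_k/s_{k+1}` and, with `t_k = s_k + s_{k+1}`,
`θ_1^k(θ_2(θ_1^h(0))) = -t_k/t_{k+1}`. For `q = 2h+3` the symmetry `s_{h+2} = s_{h+1}` makes the
last of these points `-λ_q/2`. All other ratios lie in `(-λ_q/2, 0]` because `s_k < s_{k+2}` for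
`k ≤ h`, and on that interval `f_q` inverts every `θ_n` with `n ≥ 1`; so `f_q` walks back along
both chains, ending at the fixed point `0` after `q - 2` steps without meeting it earlier.
-/

/-- `λ_q = 2 cos (π / q)`. -/
noncomputable def lam (q : ℕ) : ℝ := 2 * Real.cos (Real.pi / (q : ℝ))

/-- The modified floor `⌊t⌋′`: the unique integer `n` with `n < t ≤ n+1` if
`t > 0`, and `n ≤ t < n+1` if `t ≤ 0`. -/
noncomputable def mfloor (t : ℝ) : ℤ := if 0 < t then ⌈t⌉ - 1 else ⌊t⌋

/-- The nearest-`λ_q`-multiple function `⟨x⟩ = ⌊x/λ_q + 1/2⌋′`. -/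
noncomputable def nearLam (q : ℕ) (x : ℝ) : ℤ := mfloor (x / lam q + 1 / 2)

/-- The Hurwitz–Nakada map `f_q(x) = -1/x - ⟨-1/x⟩·λ_q`, `f_q(0) = 0`. -/
noncomputable def fq (q : ℕ) (x : ℝ) : ℝ :=
  if x = 0 then 0 else -1 / x - (nearLam q (-1 / x) : ℝ) * lam q

open Real Function

noncomputable def theta (q n : ℕ) (x : ℝ) : ℝ := -1 / (x + n * lam q)

theorem theta_one (q : ℕ) : theta q 1 = fun x => -1 / (x + lam q) := by
  funext x; simp [theta]

noncomputable def sinSeq (q k : ℕ) : ℝ := sin (k * (π / q))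

section Recurrence

variable {a : ℕ → ℝ} {c : ℝ} {k : ℕ}

theorem neg_one_div_neg_div_add (ha : a (k + 2) = c * a (k + 1) - a k) (hk : a (k + 1) ≠ 0) :
    -1 / (-a k / a (k + 1) + c) = -a (k + 1) / a (k + 2) := by
  have hsum : -a k / a (k + 1) + c = a (k + 2) / a (k + 1) := by
    rw [ha]; field_simp; ring
  rw [hsum, div_div_eq_mul_div, neg_one_mul]

theorem iterate_neg_one_div_add (ha : ∀ k, a (k + 2) = c * a (k + 1) - a k)
    (hne : ∀ j < k, a (j + 1) ≠ 0) :
    (fun x => -1 / (x + c))^[k] (-a 0 / a 1) = -a k / a (k + 1) := by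
  induction k with
  | zero => rfl
  | succ k ih =>
    rw [iterate_succ_apply', ih fun j hj => hne j (by omega)]
    exact neg_one_div_neg_div_add (ha k) (hne k k.lt_succ_self)

theorem neg_div_mem_Ioc (ha : a (k + 2) = c * a (k + 1) - a k) (h0 : 0 ≤ a k)
    (h1 : 0 < a (k + 1)) (h2 : a k < a (k + 2)) :
    -a k / a (k + 1) ∈ Set.Ioc (-c / 2) (c / 2) := by
  have hc : 0 < c := (pos_iff_pos_of_mul_pos (by linarith : 0 < c * a (k + 1))).2 h1
  constructor
  · rw [lt_div_iff₀ h1]; linarith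
  · exact (div_nonpos_of_nonpos_of_nonneg (by linarith) h1.le).trans (by linarith)

theorem add_shift_rec (ha : ∀ k, a (k + 2) = c * a (k + 1) - a k) (k : ℕ) :
    a (k + 2) + a (k + 3) = c * (a (k + 1) + a (k + 2)) - (a k + a (k + 1)) := by
  have h3 : a (k + 3) = c * a (k + 2) - a (k + 1) := ha (k + 1)
  linear_combination ha k + h3

end Recurrence

section Sine

variable {q k : ℕ}

theorem sinSeq_zero (q : ℕ) : sinSeq q 0 = 0 := by simp [sinSeq]

theorem sinSeq_add_two (q k : ℕ) :
    sinSeq q (k + 2) = lam q * sinSeq q (k + 1) - sinSeq q k := by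
  have e2 : ((k + 2 : ℕ) : ℝ) * (π / q) = (k + 1 : ℕ) * (π / q) + π / q := by
    push_cast; ring
  have e0 : (k : ℝ) * (π / q) = (k + 1 : ℕ) * (π / q) - π / q := by rw [Nat.cast_succ]; ring
  rw [sinSeq, sinSeq, sinSeq, lam, e2, e0, sin_add, sin_sub]
  ring

theorem sinSeq_pos (hk : 0 < k) (hkq : k < q) : 0 < sinSeq q k := by
  have hq : (0 : ℝ) < q := by exact_mod_cast hk.trans hkq
  apply sin_pos_of_pos_of_lt_pi (by positivity)
  calc (k : ℝ) * (π / q) < q * (π / q) := by gcongr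
    _ = π := by field_simp

theorem sinSeq_nonneg (hkq : k ≤ q) : 0 ≤ sinSeq q k := by
  rcases k.eq_zero_or_pos with rfl | hk
  · rw [sinSeq_zero]
  rcases hkq.lt_or_eq with hlt | rfl
  · exact (sinSeq_pos hk hlt).le
  · have hq : (k : ℝ) ≠ 0 := by exact_mod_cast hk.ne'
    simp [sinSeq, mul_div_cancel₀ π hq]

theorem sinSeq_eq_of_add_eq {l : ℕ} (hkl : k + l = q) : sinSeq q l = sinSeq q k := by
  rcases q.eq_zero_or_pos with rfl | hq
  · obtain ⟨rfl, rfl⟩ : k = 0 ∧ l = 0 := by omega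
    rfl
  have hq' : (q : ℝ) ≠ 0 := by exact_mod_cast hq.ne'
  have e : (l : ℝ) * (π / q) = π - k * (π / q) := by
    rw [eq_sub_iff_add_eq, ← add_mul, ← Nat.cast_add, add_comm, hkl]; field_simp
  rw [sinSeq, e, sin_pi_sub, sinSeq]

theorem sinSeq_lt_sinSeq_add_two (hk : 2 * (k + 1) < q) : sinSeq q k < sinSeq q (k + 2) := by
  have hq : (0 : ℝ) < q := by exact_mod_cast (show 0 < q by omega)
  have hcos : 0 < cos ((k + 1) * (π / q)) := by
    apply cos_pos_of_mem_Ioo ⟨by nlinarith [pi_pos, div_pos pi_pos hq], ?_⟩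
    have hk' : 2 * ((k : ℝ) + 1) < q := by exact_mod_cast hk
    rw [← mul_div_assoc, div_lt_div_iff₀ hq two_pos]
    nlinarith [pi_pos]
  have hsin : 0 < sin (π / q) := by simpa [sinSeq] using sinSeq_pos (q := q) one_pos (by omega)
  have e1 : (((k + 2 : ℕ) : ℝ) * (π / q) - k * (π / q)) / 2 = π / q := by push_cast; ring
  have e2 : (((k + 2 : ℕ) : ℝ) * (π / q) + k * (π / q)) / 2 = (k + 1) * (π / q) := by
    push_cast; ring
  rw [← sub_pos, sinSeq, sinSeq, sin_sub_sin, e1, e2]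
  positivity

end Sine

section HurwitzNakada

theorem mfloor_eq_of_mem_Ioc {t : ℝ} {n : ℤ} (hn : 0 ≤ n) (h1 : (n : ℝ) < t)
    (h2 : t ≤ n + 1) : mfloor t = n := by
  have ht : 0 < t := lt_of_le_of_lt (by exact_mod_cast hn) h1
  rw [mfloor, if_pos ht, sub_eq_iff_eq_add, Int.ceil_eq_iff]
  push_cast
  exact ⟨by linarith, h2⟩

theorem fq_theta {q n : ℕ} {r : ℝ} (hn : 1 ≤ n)
    (hr : r ∈ Set.Ioc (-lam q / 2) (lam q / 2)) :
    fq q (theta q n r) = r := by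
  obtain ⟨hr1, hr2⟩ := hr
  have hl : 0 < lam q := by linarith
  have hn' : (1 : ℝ) ≤ n := by exact_mod_cast hn
  have hpos : 0 < r + n * lam q := by nlinarith
  have hinv : -1 / theta q n r = r + n * lam q := by rw [theta]; field_simp
  have hratio : -1 / 2 < r / lam q ∧ r / lam q ≤ 1 / 2 := by
    constructor
    · rw [lt_div_iff₀ hl]; linarith
    · rw [div_le_iff₀ hl]; linarith
  have hnear : nearLam q (r + n * lam q) = n := by
    have e : (r + n * lam q) / lam q + 1 / 2 = n + (r / lam q + 1 / 2) := by field_simp; ring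
    rw [nearLam, e]
    exact_mod_cast mfloor_eq_of_mem_Ioc (Int.natCast_nonneg n) (by push_cast; linarith)
      (by push_cast; linarith)
  have hne : theta q n r ≠ 0 := by
    rw [theta]; exact div_ne_zero (by norm_num) hpos.ne'
  rw [fq, if_neg hne, hinv, hnear]
  push_cast
  ring

theorem iterate_fq_of_theta_chain {q m i : ℕ} {x : ℕ → ℝ}
    (hx : ∀ k < m, x (k + 1) = theta q 1 (x k))
    (hI : ∀ k < m, x k ∈ Set.Ioc (-lam q / 2) (lam q / 2)) (hi : i ≤ m) :
    (fq q)^[i] (x m) = x (m - i) := by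
  induction i with
  | zero => rfl
  | succ i ih =>
    rw [iterate_succ_apply', ih (by omega), show m - i = m - (i + 1) + 1 by omega,
      hx _ (by omega), fq_theta le_rfl (hI _ (by omega))]

end HurwitzNakada

theorem Function.injective_fin_iterate_of_ne {α : Type*} {f : α → α} {x y : α} {N : ℕ}
    (hN : f^[N] x = y) (hne : ∀ n < N, f^[n] x ≠ y) :
    Injective (fun i : Fin (N + 1) => f^[i] x) := by
  have key : ∀ i j : ℕ, i < j → j ≤ N → f^[i] x ≠ f^[j] x := by
    intro i j hij hjN heq
    apply hne (N - j + i) (by omega)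
    rw [iterate_add_apply, heq, ← iterate_add_apply, Nat.sub_add_cancel hjN, hN]
  intro i j hij
  by_contra hij'
  rcases lt_or_gt_of_ne (Fin.val_injective.ne hij') with hlt | hgt
  · exact key i j hlt (by omega) hij
  · exact key j i hgt (by omega) hij.symm

theorem Function.iterate_mem_range_fin_of_isFixedPt {α : Type*} {f : α → α} {x y : α}
    {N : ℕ}
    (hN : f^[N] x = y) (hy : IsFixedPt f y) (n : ℕ) :
    f^[n] x ∈ Set.range (fun i : Fin (N + 1) => f^[i] x) := by
  rcases le_or_gt n N with hle | hgt
  · exact ⟨⟨n, by omega⟩, rfl⟩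
  · refine ⟨⟨N, by omega⟩, ?_⟩
    show f^[N] x = f^[n] x
    rw [show n = n - N + N by omega, iterate_add_apply, hN, (hy.iterate _).eq]

section OddOrbit

variable {h q : ℕ}

theorem theta_iterate_zero (hq : q = 2 * h + 3) {k : ℕ} (hk : k ≤ h + 1) :
    (theta q 1)^[k] 0 = -sinSeq q k / sinSeq q (k + 1) := by
  have := iterate_neg_one_div_add (sinSeq_add_two q) (k := k)
    fun j hj => (sinSeq_pos (by omega) (by omega)).ne'
  rw [sinSeq_zero, neg_zero, zero_div] at this
  rwa [theta_one]

theorem theta_iterate_zero_mem (hq : q = 2 * h + 3) {k : ℕ} (hk : k ≤ h) :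
    (theta q 1)^[k] 0 ∈ Set.Ioc (-lam q / 2) (lam q / 2) := by
  rw [theta_iterate_zero hq (by omega)]
  exact neg_div_mem_Ioc (sinSeq_add_two q k) (sinSeq_nonneg (by omega))
    (sinSeq_pos (by omega) (by omega)) (sinSeq_lt_sinSeq_add_two (by omega))

theorem theta_two_theta_iterate_zero (hq : q = 2 * h + 3) :
    theta q 2 ((theta q 1)^[h] 0) = -(sinSeq q 0 + sinSeq q 1) / (sinSeq q 1 + sinSeq q 2) := by
  have h1 : 0 < sinSeq q 1 := sinSeq_pos one_pos (by omega)
  have hh : 0 < sinSeq q (h + 1) := sinSeq_pos (by omega) (by omega)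
  have hsym : sinSeq q (h + 2) = sinSeq q (h + 1) := sinSeq_eq_of_add_eq (by omega)
  have hrec := sinSeq_add_two q h
  have h2 : sinSeq q 2 = lam q * sinSeq q 1 := by simpa [sinSeq_zero] using sinSeq_add_two q 0
  have hl : 0 < lam q := (pos_iff_pos_of_mul_pos (h2 ▸ sinSeq_pos two_pos (by omega))).2 h1
  -- the symmetry gives `θ_1^h(0) = 1 - λ_q`, so both sides equal `-1/(1 + λ_q)`
  have hX : -sinSeq q h / sinSeq q (h + 1) = 1 - lam q := by
    rw [div_eq_iff hh.ne']; linarith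
  rw [theta_iterate_zero hq (by omega), theta, hX, sinSeq_zero, h2,
    div_eq_div_iff (by push_cast; linarith) (by nlinarith)]
  push_cast
  ring

theorem theta_iterate_theta_two (hq : q = 2 * h + 3) {k : ℕ} (hk : k ≤ h) :
    (theta q 1)^[k] (theta q 2 ((theta q 1)^[h] 0)) =
      -(sinSeq q k + sinSeq q (k + 1)) / (sinSeq q (k + 1) + sinSeq q (k + 2)) := by
  rw [theta_two_theta_iterate_zero hq]
  have := iterate_neg_one_div_add (a := fun k => sinSeq q k + sinSeq q (k + 1))
    (add_shift_rec (sinSeq_add_two q)) (k := k)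
    fun j hj => (add_pos (sinSeq_pos (by omega) (by omega)) (sinSeq_pos (by omega) (by omega))).ne'
  rw [theta_one]
  exact this

theorem theta_iterate_theta_two_mem (hq : q = 2 * h + 3) {k : ℕ} (hk : k < h) :
    (theta q 1)^[k] (theta q 2 ((theta q 1)^[h] 0)) ∈ Set.Ioc (-lam q / 2) (lam q / 2) := by
  rw [theta_iterate_theta_two hq hk.le]
  exact neg_div_mem_Ioc (a := fun k => sinSeq q k + sinSeq q (k + 1))
    (add_shift_rec (sinSeq_add_two q) k)
    (add_nonneg (sinSeq_nonneg (by omega)) (sinSeq_nonneg (by omega)))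
    (add_pos (sinSeq_pos (by omega) (by omega)) (sinSeq_pos (by omega) (by omega)))
    (add_lt_add (sinSeq_lt_sinSeq_add_two (by omega)) (sinSeq_lt_sinSeq_add_two (by omega)))

theorem theta_iterate_theta_two_eq_neg_half (hq : q = 2 * h + 3) :
    (theta q 1)^[h] (theta q 2 ((theta q 1)^[h] 0)) = -lam q / 2 := by
  have hh : 0 < sinSeq q (h + 1) := sinSeq_pos (by omega) (by omega)
  have hsym : sinSeq q (h + 2) = sinSeq q (h + 1) := sinSeq_eq_of_add_eq (by omega)
  have hrec := sinSeq_add_two q h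
  rw [theta_iterate_theta_two hq le_rfl, hsym, div_eq_div_iff (by linarith) two_ne_zero]
  linear_combination (-2 : ℝ) * hrec + 2 * hsym

theorem orbit_first_half (hq : q = 2 * h + 3) {i : ℕ} (hi : i ≤ h) :
    (fq q)^[i] (-lam q / 2) = (theta q 1)^[h - i] (theta q 2 ((theta q 1)^[h] 0)) := by
  rw [← theta_iterate_theta_two_eq_neg_half hq]
  exact iterate_fq_of_theta_chain (x := fun k => (theta q 1)^[k] _)
    (fun _ _ => iterate_succ_apply' ..) (fun _ hk => theta_iterate_theta_two_mem hq hk) hi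

theorem orbit_second_half (hq : q = 2 * h + 3) {i : ℕ} (hi : i ≤ h) :
    (fq q)^[h + 1 + i] (-lam q / 2) = (theta q 1)^[h - i] 0 := by
  rw [show h + 1 + i = i + (h + 1) by omega, iterate_add_apply, iterate_succ_apply',
    orbit_first_half hq le_rfl, Nat.sub_self, iterate_zero_apply,
    fq_theta one_le_two (theta_iterate_zero_mem hq le_rfl)]
  exact iterate_fq_of_theta_chain (x := fun k => (theta q 1)^[k] 0)
    (fun _ _ => iterate_succ_apply' ..) (fun _ hk => theta_iterate_zero_mem hq hk.le) hi

theorem orbit_ne_zero (hq : q = 2 * h + 3) {n : ℕ} (hn : n < q - 2) :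
    (fq q)^[n] (-lam q / 2) ≠ 0 := by
  have pos : ∀ j, 0 < j → j < q → 0 < sinSeq q j := fun _ => sinSeq_pos
  rcases le_or_gt n h with hle | hgt
  · rw [orbit_first_half hq hle, theta_iterate_theta_two hq (by omega)]
    exact (div_neg_of_neg_of_pos (neg_neg_of_pos
      (add_pos_of_nonneg_of_pos (sinSeq_nonneg (by omega)) (pos _ (by omega) (by omega))))
      (add_pos (pos _ (by omega) (by omega)) (pos _ (by omega) (by omega)))).ne
  · obtain ⟨i, rfl⟩ : ∃ i, n = h + 1 + i := ⟨n - (h + 1), by omega⟩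
    rw [orbit_second_half hq (by omega), theta_iterate_zero hq (by omega)]
    exact (div_neg_of_neg_of_pos (neg_neg_of_pos (pos _ (by omega) (by omega)))
      (pos _ (by omega) (by omega))).ne

end OddOrbit

/-- for odd `q = 2h+3`, the `f_q`-orbit of `-λ_q/2` satisfies
`f_q^i(-λ_q/2) = θ_1^{∘(h-i)}(θ_2(θ_1^{∘h}(0)))` for `0 ≤ i ≤ h` and
`f_q^{h+1+i}(-λ_q/2) = θ_1^{∘(h-i)}(0)` for `0 ≤ i ≤ h` (with
`θ_1(x) = -1/(x+λ_q)`, `θ_2(x) = -1/(x+2λ_q)`). In particular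
`f_q^{q-2}(-λ_q/2) = 0` and the `q-1` points `f_q^i(-λ_q/2)`, `0 ≤ i ≤ q-2`, are
pairwise distinct, so the orbit has exactly `q-1 = κ_q + 1` elements. -/
theorem stmt19 (h q : ℕ) (hq : q = 2 * h + 3) :
    let t1 : ℝ → ℝ := fun x => -1 / (x + lam q)
    let t2 : ℝ → ℝ := fun x => -1 / (x + 2 * lam q)
    (∀ i ≤ h, (fq q)^[i] (-(lam q) / 2) = t1^[h - i] (t2 (t1^[h] 0))) ∧
    (∀ i ≤ h, (fq q)^[h + 1 + i] (-(lam q) / 2) = t1^[h - i] 0) ∧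
    (fq q)^[q - 2] (-(lam q) / 2) = 0 ∧
    Function.Injective (fun i : Fin (q - 1) => (fq q)^[(i : ℕ)] (-(lam q) / 2)) ∧
    (∀ n : ℕ, (fq q)^[n] (-(lam q) / 2) ∈
      Set.range (fun i : Fin (q - 1) => (fq q)^[(i : ℕ)] (-(lam q) / 2))) := by
  intro t1 t2
  have ht1 : t1 = theta q 1 := (theta_one q).symm
  have ht2 : t2 = theta q 2 := funext fun x => by simp [t2, theta]
  have hend : (fq q)^[q - 2] (-(lam q) / 2) = 0 := by
    simpa [show q - 2 = h + 1 + h by omega] using orbit_second_half hq le_rfl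
  have hcard : q - 1 = q - 2 + 1 := by omega
  refine ⟨fun i hi => ?_, fun i hi => ?_, hend, ?_, ?_⟩
  · rw [ht1, ht2]; exact orbit_first_half hq hi
  · rw [ht1]; exact orbit_second_half hq hi
  · rw [hcard]
    exact injective_fin_iterate_of_ne hend fun n hn => orbit_ne_zero hq hn
  · rw [hcard]
    exact iterate_mem_range_fin_of_isFixedPt hend (by simp [IsFixedPt, fq])
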